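/- arXiv:2110.00467 — 5 statements merged into one kernel-verified Lean document; each statement's English description precedes it below -/
import Mathlib

section
/- Let μ_0 be a Borel probability measure on a closed interval I ⊆ R with continuous cdf F_{μ_0}. For μ in the Wasserstein space W_2(I), define log_{μ_0}(μ) = F_μ^{-1} ∘ F_{μ_0} - id, regarded as an element of L²(μ_0). Then the map log_{μ_0} : W_2(I) → L²(μ_0) is an isometry: for all μ_1, μ_2 ∈ W_2(I), ‖log_{μ_0}(μ_1) - log_{μ_0}(μ_2)‖_{L²(μ_0)} = d_W(μ_1, μ_2). In particular, log_{μ_0} is a continuous injection into a separable Hilbert space. -/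
/-!
The two log maps share the inner map `F := cdf μ₀`, so their difference is
`(F_{μ₁}⁻¹ - F_{μ₂}⁻¹) ∘ F`. Since `F` is continuous, each sublevel set `{F ≤ u}` with `u < 1`
is empty or a closed half-line `Iic c` with `F c = u`; hence `μ₀ {F ≤ u} = u`, i.e. `F` pushes
`μ₀` forward to the uniform measure on `(0,1)`, and the identity is a change of variables.
-/

open MeasureTheory ProbabilityTheory

/-- The quantile function (generalized inverse cdf) of a probability measure on `ℝ`. -/
noncomputable def quantileFn (μ : Measure ℝ) (s : ℝ) : ℝ :=
  sInf {t : ℝ | s ≤ ProbabilityTheory.cdf μ t}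

/-- The log map at `μ₀`: `log_{μ₀}(μ) = F_μ⁻¹ ∘ F_{μ₀} - id`, as a function on `ℝ`
(regarded as an element of `L²(μ₀)`). -/
noncomputable def wassersteinLog (μ₀ μ : Measure ℝ) (t : ℝ) : ℝ :=
  quantileFn μ (ProbabilityTheory.cdf μ₀ t) - t

open Set Filter Topology

lemma Monotone.preimage_Iic_eq_Iic_csSup {f : ℝ → ℝ} (hf : Monotone f) (hfc : Continuous f)
    {u : ℝ} (hne : (f ⁻¹' Iic u).Nonempty) (hbdd : BddAbove (f ⁻¹' Iic u)) :
    f ⁻¹' Iic u = Iic (sSup (f ⁻¹' Iic u)) ∧ f (sSup (f ⁻¹' Iic u)) = u := by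
  have hS : f ⁻¹' Iic u = Iic (sSup (f ⁻¹' Iic u)) := by
    rw [← lowerClosure_eq_Iic_csSup hne hbdd (isClosed_Iic.preimage hfc),
      ((isLowerSet_Iic u).preimage hf).lowerClosure]
  have hmem : sSup (f ⁻¹' Iic u) ∈ f ⁻¹' Iic u := hS.symm.subset self_mem_Iic
  refine ⟨hS, le_antisymm hmem ?_⟩
  obtain ⟨x₀, hx₀⟩ := hne
  obtain ⟨x₁, hx₁⟩ : ∃ x₁, x₁ ∉ f ⁻¹' Iic u :=
    not_forall.mp fun h ↦ not_bddAbove_univ (hbdd.mono fun x _ ↦ h x)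
  obtain ⟨y, rfl⟩ : u ∈ range f :=
    intermediate_value_univ x₀ x₁ hfc ⟨hx₀, (not_le.mp hx₁).le⟩
  exact hf (le_csSup hbdd (le_refl (f y)))

lemma measure_preimage_cdf_Iic (μ : Measure ℝ) [IsProbabilityMeasure μ] (hc : Continuous (cdf μ))
    {u : ℝ} (hu : u < 1) : μ (cdf μ ⁻¹' Iic u) = ENNReal.ofReal u := by
  rcases (cdf μ ⁻¹' Iic u).eq_empty_or_nonempty with hempty | hne
  · have hu₀ : u ≤ 0 := by
      by_contra! hpos
      obtain ⟨x, hx⟩ := ((tendsto_cdf_atBot μ).eventually (eventually_lt_nhds hpos)).exists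
      exact hempty.subset (show x ∈ cdf μ ⁻¹' Iic u from hx.le)
    rw [hempty, measure_empty, ENNReal.ofReal_of_nonpos hu₀]
  · have hbdd : BddAbove (cdf μ ⁻¹' Iic u) := by
      obtain ⟨x, hx⟩ := ((tendsto_cdf_atTop μ).eventually (eventually_gt_nhds hu)).exists
      exact ⟨x, fun t ht ↦ ((monotone_cdf μ).reflect_lt (lt_of_le_of_lt ht hx)).le⟩
    obtain ⟨hS, hcu⟩ := (monotone_cdf μ).preimage_Iic_eq_Iic_csSup hc hne hbdd
    rw [hS, ← ofReal_cdf, hcu]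

lemma map_cdf_of_continuous (μ : Measure ℝ) [IsProbabilityMeasure μ] (hc : Continuous (cdf μ)) :
    μ.map (cdf μ) = volume.restrict (Ioo 0 1) := by
  have : IsProbabilityMeasure (μ.map (cdf μ)) := Measure.isProbabilityMeasure_map hc.aemeasurable
  have : IsFiniteMeasure (volume.restrict (Ioo (0 : ℝ) 1)) := ⟨by simp⟩
  refine Measure.ext_of_Iic _ _ fun u ↦ ?_
  rw [Measure.map_apply hc.measurable measurableSet_Iic, Measure.restrict_apply measurableSet_Iic]
  rcases lt_or_ge u 1 with hu | hu
  · have hinter : Iic u ∩ Ioo 0 1 = Ioc 0 u := by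
      ext x
      simp only [mem_inter_iff, mem_Iic, mem_Ioo, mem_Ioc]
      grind
    rw [measure_preimage_cdf_Iic μ hc hu, hinter, Real.volume_Ioc, sub_zero]
  · have hpre : cdf μ ⁻¹' Iic u = univ := eq_univ_of_forall fun x ↦ (cdf_le_one μ x).trans hu
    rw [hpre, measure_univ, inter_eq_right.2 fun x hx ↦ hx.2.le.trans hu, Real.volume_Ioo]
    norm_num

lemma integral_comp_cdf {E : Type*} [NormedAddCommGroup E] [NormedSpace ℝ E]
    (μ : Measure ℝ) [IsProbabilityMeasure μ] (hc : Continuous (cdf μ)) {g : ℝ → E}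
    (hg : AEStronglyMeasurable g (volume.restrict (Ioo 0 1))) :
    ∫ t, g (cdf μ t) ∂μ = ∫ s in Ioo 0 1, g s := by
  rw [← map_cdf_of_continuous μ hc] at hg ⊢
  exact (integral_map hc.aemeasurable hg).symm

lemma quantileFn_monotoneOn (μ : Measure ℝ) : MonotoneOn (quantileFn μ) (Ioo 0 1) := by
  intro s hs s' hs' hss'
  have hne : {t | s' ≤ cdf μ t}.Nonempty :=
    ((tendsto_cdf_atTop μ).eventually (eventually_gt_nhds hs'.2)).exists.imp fun _ ↦ le_of_lt
  have hbdd : BddBelow {t | s ≤ cdf μ t} := by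
    obtain ⟨x, hx⟩ := ((tendsto_cdf_atBot μ).eventually (eventually_lt_nhds hs.1)).exists
    exact ⟨x, fun t ht ↦ ((monotone_cdf μ).reflect_lt (lt_of_lt_of_le hx ht)).le⟩
  exact csInf_le_csInf hbdd hne fun t ht ↦ hss'.trans ht

lemma aemeasurable_quantileFn (μ : Measure ℝ) :
    AEMeasurable (quantileFn μ) (volume.restrict (Ioo 0 1)) :=
  aemeasurable_restrict_of_monotoneOn measurableSet_Ioo (quantileFn_monotoneOn μ)

theorem wassersteinLog_isometry_general
    (μ₀ μ₁ μ₂ : Measure ℝ)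
    [IsProbabilityMeasure μ₀]
    (hc₀ : Continuous (ProbabilityTheory.cdf μ₀)) :
    Real.sqrt (∫ t, (wassersteinLog μ₀ μ₁ t - wassersteinLog μ₀ μ₂ t) ^ 2 ∂μ₀)
      = Real.sqrt (∫ s in Set.Ioo (0 : ℝ) 1, (quantileFn μ₁ s - quantileFn μ₂ s) ^ 2) := by
  have hmeas : AEStronglyMeasurable (fun s ↦ (quantileFn μ₁ s - quantileFn μ₂ s) ^ 2)
      (volume.restrict (Ioo 0 1)) :=
    (((aemeasurable_quantileFn μ₁).sub (aemeasurable_quantileFn μ₂)).pow_const 2)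
      |>.aestronglyMeasurable
  simp only [wassersteinLog, sub_sub_sub_cancel_right]
  rw [integral_comp_cdf μ₀ hc₀ hmeas]

/-- the log map on Wasserstein space is an isometry into `L²(μ₀)`.
Let `μ₀` be a Borel probability measure on the closed interval `I = [a,b]` with
continuous cdf, and let `μ₁, μ₂` be members of the Wasserstein space `W₂(I)`
(probability measures supported on `I` with finite second moment). Then
`‖log_{μ₀}(μ₁) - log_{μ₀}(μ₂)‖_{L²(μ₀)} = d_W(μ₁, μ₂)`, where
`d_W(μ₁,μ₂) = (∫_0^1 (F_{μ₁}⁻¹(s) - F_{μ₂}⁻¹(s))² ds)^{1/2}`. -/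
theorem wassersteinLog_isometry
    (a b : ℝ) (hab : a ≤ b)
    (μ₀ μ₁ μ₂ : Measure ℝ)
    [IsProbabilityMeasure μ₀] [IsProbabilityMeasure μ₁] [IsProbabilityMeasure μ₂]
    (hsupp₀ : μ₀ (Set.Icc a b)ᶜ = 0) (hsupp₁ : μ₁ (Set.Icc a b)ᶜ = 0)
    (hsupp₂ : μ₂ (Set.Icc a b)ᶜ = 0)
    (hm₀ : MeasureTheory.MemLp id 2 μ₀) (hm₁ : MeasureTheory.MemLp id 2 μ₁)
    (hm₂ : MeasureTheory.MemLp id 2 μ₂)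
    (hc₀ : Continuous (ProbabilityTheory.cdf μ₀)) :
    Real.sqrt (∫ t, (wassersteinLog μ₀ μ₁ t - wassersteinLog μ₀ μ₂ t) ^ 2 ∂μ₀)
      = Real.sqrt (∫ s in Set.Ioo (0 : ℝ) 1, (quantileFn μ₁ s - quantileFn μ₂ s) ^ 2) :=
  wassersteinLog_isometry_general μ₀ μ₁ μ₂ hc₀
end

section
/- Let I be a compact interval and K ⊆ W_2(I) a compact subset of the Wasserstein space. For any γ > 0, the Gaussian-type kernel κ_G(μ, ν) = exp(-γ d_W(μ, ν)²) and the Laplacian-type kernel κ_L(μ, ν) = exp(-γ d_W(μ, ν)) are positive definite kernels on K. -/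
open MeasureTheory ProbabilityTheory

/-- The quadratic Wasserstein distance between one-dimensional probability measures. -/
noncomputable def wassersteinDist (μ ν : Measure ℝ) : ℝ :=
  Real.sqrt (∫ s in Set.Ioo (0 : ℝ) 1, (quantileFn μ s - quantileFn ν s) ^ 2)

/-!
The quantile map `μ ↦ F_μ⁻¹` sends measures supported in `[a, b]` to bounded functions and is
an isometry from `d_W` into `L²(0, 1)`, so it suffices to show that `exp (-γ ‖x - y‖ ^ 2)` and
`exp (-γ ‖x - y‖)` are positive definite kernels on a real inner product space.

Since `exp (-γ ‖x - y‖ ^ 2) = exp (-γ ‖x‖ ^ 2) * exp (2γ ⟪x, y⟫) * exp (-γ ‖y‖ ^ 2)`, the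
Gaussian kernel is a diagonal congruence of the entrywise exponential of a Gram matrix, and
entrywise exponentials of positive semidefinite matrices are positive semidefinite by the Schur
product theorem and the power series of `exp`. For the Laplacian kernel, the identity
`C ‖x‖ = ∫₀^∞ (1 - exp (-t² ‖x‖²)) / t² dt` turns the positive definiteness of the Gaussian
kernels into conditional negative definiteness of `‖x - y‖`; hence `‖x‖ + ‖y‖ - ‖x - y‖` is
positive semidefinite, and the same exponential argument applies.
-/

open Set Matrix
open scoped Nat ComplexOrder

namespace Matrix

variable {ι : Type*} [Fintype ι]

theorem posSemidef_iff_sum_sum_mul_mul_nonneg {A : Matrix ι ι ℝ} :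
    A.PosSemidef ↔ A.IsHermitian ∧ ∀ c : ι → ℝ, 0 ≤ ∑ i, ∑ j, c i * c j * A i j := by
  rw [posSemidef_iff_dotProduct_mulVec]
  refine and_congr_right fun _ => forall_congr' fun c => ?_
  simp only [star_trivial, dotProduct, mulVec, Finset.mul_sum]
  exact iff_of_eq <| congrArg _ <|
    Finset.sum_congr rfl fun i _ => Finset.sum_congr rfl fun j _ => by ring

theorem PosSemidef.sum_sum_mul_mul_nonneg {A : Matrix ι ι ℝ} (hA : A.PosSemidef) (c : ι → ℝ) :
    0 ≤ ∑ i, ∑ j, c i * c j * A i j :=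
  (posSemidef_iff_sum_sum_mul_mul_nonneg.1 hA).2 c

theorem PosSemidef.map_pow {𝕜 : Type*} [RCLike 𝕜] {A : Matrix ι ι 𝕜} (hA : A.PosSemidef)
    (n : ℕ) : (A.map (· ^ n)).PosSemidef := by
  induction n with
  | zero =>
    convert posSemidef_vecMulVec_self_star (1 : ι → 𝕜) using 1
    ext i j
    simp [vecMulVec_apply]
  | succ n ih =>
    convert ih.hadamard hA using 1
    ext i j
    exact pow_succ _ _

theorem PosSemidef.map_exp {A : Matrix ι ι ℝ} (hA : A.PosSemidef) :
    (A.map Real.exp).PosSemidef := by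
  refine posSemidef_iff_sum_sum_mul_mul_nonneg.2 ⟨hA.isHermitian.map _ fun _ => rfl, fun c => ?_⟩
  have hsum : HasSum (fun n : ℕ => (∑ i, ∑ j, c i * c j * A i j ^ n) / n !)
      (∑ i, ∑ j, c i * c j * Real.exp (A i j)) := by
    simp only [Finset.sum_div, mul_div_assoc]
    refine hasSum_sum fun i _ => hasSum_sum fun j _ => ?_
    exact (Real.exp_eq_exp_ℝ ▸ NormedSpace.expSeries_div_hasSum_exp (A i j)).mul_left _
  exact hsum.nonneg fun n =>
    div_nonneg ((hA.map_pow n).sum_sum_mul_mul_nonneg c) (by positivity)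

theorem posSemidef_of_exp_add_add {B : Matrix ι ι ℝ} (hB : B.PosSemidef) (f : ι → ℝ) :
    (of fun i j => Real.exp (f i + B i j + f j)).PosSemidef := by
  classical
  convert hB.map_exp.mul_mul_conjTranspose_same (diagonal fun i => Real.exp (f i)) using 1
  ext i j
  simp [diagonal_mul, mul_diagonal, Real.exp_add]

end Matrix

section SqrtIntegralRepresentation

open Real

theorem one_sub_exp_neg_sq_div_sq_le {t : ℝ} (ht : 0 < t) :
    (1 - exp (-t ^ 2)) / t ^ 2 ≤ 2 * (1 + t ^ 2)⁻¹ := by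
  have h₁ : 1 - exp (-t ^ 2) ≤ t ^ 2 := by linarith [add_one_le_exp (-t ^ 2)]
  have h₂ : 1 - exp (-t ^ 2) ≤ 1 := by linarith [exp_pos (-t ^ 2)]
  rw [div_le_iff₀ (by positivity), mul_assoc, mul_comm, mul_assoc, ← div_eq_inv_mul,
    le_div_iff₀ (by positivity)]
  nlinarith

theorem integrableOn_one_sub_exp_neg_sq_div_sq :
    IntegrableOn (fun t => (1 - exp (-t ^ 2)) / t ^ 2) (Ioi 0) := by
  refine Integrable.mono' (integrable_inv_one_add_sq.const_mul 2).integrableOn ?_ ?_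
  · refine ContinuousOn.aestronglyMeasurable ?_ measurableSet_Ioi
    exact ContinuousOn.div (by fun_prop) (by fun_prop) fun t ht => pow_ne_zero _ (ne_of_gt ht)
  · refine (ae_restrict_iff' measurableSet_Ioi).2 (Filter.Eventually.of_forall fun t ht => ?_)
    have hnonneg : 0 ≤ 1 - exp (-t ^ 2) := by
      linarith [exp_le_one_iff.2 (neg_nonpos.2 (sq_nonneg t))]
    rw [Real.norm_of_nonneg (by positivity)]
    exact one_sub_exp_neg_sq_div_sq_le ht

theorem one_sub_exp_neg_sq_mul_div_sq_eq {u t : ℝ} (hu : 0 < u) (ht : t ≠ 0) :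
    (1 - exp (-t ^ 2 * u)) / t ^ 2 = u * ((1 - exp (-(√u * t) ^ 2)) / (√u * t) ^ 2) := by
  rw [mul_pow, sq_sqrt hu.le]
  field_simp

theorem integrableOn_one_sub_exp_neg_sq_mul_div_sq {u : ℝ} (hu : 0 ≤ u) :
    IntegrableOn (fun t => (1 - exp (-t ^ 2 * u)) / t ^ 2) (Ioi 0) := by
  rcases hu.eq_or_lt with rfl | hu
  · simp
  have hscaled : IntegrableOn (fun t => (1 - exp (-(√u * t) ^ 2)) / (√u * t) ^ 2) (Ioi 0) := by
    rw [integrableOn_Ioi_comp_mul_left_iff (fun t => (1 - exp (-t ^ 2)) / t ^ 2) 0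
      (sqrt_pos.2 hu), mul_zero]
    exact integrableOn_one_sub_exp_neg_sq_div_sq
  exact IntegrableOn.congr_fun (hscaled.const_mul u)
    (fun t ht => (one_sub_exp_neg_sq_mul_div_sq_eq hu (ne_of_gt ht)).symm) measurableSet_Ioi

theorem integral_one_sub_exp_neg_sq_mul_div_sq {u : ℝ} (hu : 0 ≤ u) :
    ∫ t in Ioi 0, (1 - exp (-t ^ 2 * u)) / t ^ 2 =
      √u * ∫ t in Ioi 0, (1 - exp (-t ^ 2)) / t ^ 2 := by
  rcases hu.eq_or_lt with rfl | hu
  · simp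
  rw [setIntegral_congr_fun measurableSet_Ioi fun t ht =>
      one_sub_exp_neg_sq_mul_div_sq_eq hu (ne_of_gt ht), integral_const_mul,
    integral_comp_mul_left_Ioi (fun t => (1 - exp (-t ^ 2)) / t ^ 2) 0 (sqrt_pos.2 hu),
    mul_zero, smul_eq_mul, ← mul_assoc, ← div_eq_mul_inv, div_sqrt]

theorem integral_one_sub_exp_neg_sq_div_sq_pos :
    0 < ∫ t in Ioi 0, (1 - exp (-t ^ 2)) / t ^ 2 := by
  have hpos : ∀ t ∈ Ioi (0 : ℝ), 0 < (1 - exp (-t ^ 2)) / t ^ 2 := fun t ht =>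
    div_pos (sub_pos.2 (exp_lt_one_iff.2 (neg_neg_of_pos (pow_pos ht 2)))) (pow_pos ht 2)
  refine (setIntegral_pos_iff_support_of_nonneg_ae ?_
    integrableOn_one_sub_exp_neg_sq_div_sq).2 ?_
  · exact (ae_restrict_iff' measurableSet_Ioi).2 (Filter.Eventually.of_forall fun t ht =>
      (hpos t ht).le)
  · rw [inter_eq_right.2 fun t ht => Function.mem_support.2 (hpos t ht).ne', Real.volume_Ioi]
    exact ENNReal.zero_lt_top

end SqrtIntegralRepresentation

section InnerProductSpace

variable {ι E : Type*} [Fintype ι] [NormedAddCommGroup E] [InnerProductSpace ℝ E]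

theorem posSemidef_exp_neg_mul_norm_sub_sq (v : ι → E) {γ : ℝ} (hγ : 0 ≤ γ) :
    (of fun i j => Real.exp (-γ * ‖v i - v j‖ ^ 2)).PosSemidef := by
  convert posSemidef_of_exp_add_add ((posSemidef_gram ℝ v).smul (mul_nonneg zero_le_two hγ))
    (fun i => -γ * ‖v i‖ ^ 2) using 1
  ext i j
  simp only [of_apply, Matrix.smul_apply, gram_apply, smul_eq_mul, norm_sub_sq_real]
  ring_nf

theorem sum_sum_mul_mul_norm_sub_nonpos (v : ι → E) {c : ι → ℝ} (hc : ∑ i, c i = 0) :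
    ∑ i, ∑ j, c i * c j * ‖v i - v j‖ ≤ 0 := by
  have hcc : ∑ i, ∑ j, c i * c j = 0 := by rw [← Finset.sum_mul_sum, hc, zero_mul]
  have hint (i j : ι) := (integrableOn_one_sub_exp_neg_sq_mul_div_sq
    (sq_nonneg ‖v i - v j‖)).const_mul (c i * c j)
  have hrepr : (∑ i, ∑ j, c i * c j * ‖v i - v j‖) *
        ∫ t in Ioi 0, (1 - Real.exp (-t ^ 2)) / t ^ 2 =
      ∫ t in Ioi 0, -(∑ i, ∑ j, c i * c j * Real.exp (-t ^ 2 * ‖v i - v j‖ ^ 2)) / t ^ 2 := by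
    calc _
        = ∑ i, ∑ j, ∫ t in Ioi 0,
            c i * c j * ((1 - Real.exp (-t ^ 2 * ‖v i - v j‖ ^ 2)) / t ^ 2) := by
          simp only [Finset.sum_mul, integral_const_mul,
            integral_one_sub_exp_neg_sq_mul_div_sq (sq_nonneg _), Real.sqrt_sq (norm_nonneg _),
            mul_assoc]
      _ = ∫ t in Ioi 0, ∑ i, ∑ j,
            c i * c j * ((1 - Real.exp (-t ^ 2 * ‖v i - v j‖ ^ 2)) / t ^ 2) := by
          rw [integral_finsetSum _ fun i _ => integrable_finsetSum _ fun j _ => hint i j]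
          exact Finset.sum_congr rfl fun i _ => (integral_finsetSum _ fun j _ => hint i j).symm
      _ = _ := by
          refine setIntegral_congr_fun measurableSet_Ioi fun t _ => ?_
          have hsplit (i j : ι) :
              c i * c j * ((1 - Real.exp (-t ^ 2 * ‖v i - v j‖ ^ 2)) / t ^ 2) =
                c i * c j / t ^ 2 - c i * c j * Real.exp (-t ^ 2 * ‖v i - v j‖ ^ 2) / t ^ 2 := by
            ring
          simp only [hsplit, Finset.sum_sub_distrib, ← Finset.sum_div, hcc, zero_div, zero_sub,
            neg_div]
  have hneg :
      ∫ t in Ioi 0, -(∑ i, ∑ j, c i * c j * Real.exp (-t ^ 2 * ‖v i - v j‖ ^ 2)) / t ^ 2 ≤ 0 :=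
    setIntegral_nonpos measurableSet_Ioi fun t _ => div_nonpos_of_nonpos_of_nonneg
      (neg_nonpos.2 ((posSemidef_exp_neg_mul_norm_sub_sq v (sq_nonneg t)).sum_sum_mul_mul_nonneg c))
      (sq_nonneg t)
  exact nonpos_of_mul_nonpos_left (hrepr ▸ hneg) integral_one_sub_exp_neg_sq_div_sq_pos

theorem posSemidef_norm_add_norm_sub_norm_sub (v : ι → E) :
    (of fun i j => ‖v i‖ + ‖v j‖ - ‖v i - v j‖).PosSemidef := by
  refine posSemidef_iff_sum_sum_mul_mul_nonneg.2 ⟨?_, fun d => ?_⟩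
  · ext i j
    simp [norm_sub_rev, add_comm]
  -- adjoin the origin to the family, with weight `-∑ i, d i`
  have h := sum_sum_mul_mul_norm_sub_nonpos (fun o : Option ι => o.elim 0 v)
    (c := fun o => o.elim (-∑ i, d i) d) (by simp [Fintype.sum_option])
  simp only [Fintype.sum_option, Option.elim_none, Option.elim_some, mul_neg, neg_mul, sub_zero,
    zero_sub, norm_zero, norm_neg, mul_zero, neg_zero, zero_add, add_zero, Finset.sum_neg_distrib,
    neg_add_le_iff_le_add] at h
  simp only [of_apply, mul_add, mul_sub, Finset.sum_add_distrib, Finset.sum_sub_distrib]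
  rw [Finset.sum_add_distrib, Finset.sum_neg_distrib] at h
  have h₁ : ∑ i, ∑ j, d i * d j * ‖v i‖ = (∑ i, d i * ‖v i‖) * ∑ j, d j := by
    rw [Finset.sum_mul_sum]
    exact Finset.sum_congr rfl fun i _ => Finset.sum_congr rfl fun j _ => by ring
  have h₂ : ∑ i, ∑ j, d i * d j * ‖v j‖ = (∑ i, d i) * ∑ j, d j * ‖v j‖ := by
    rw [Finset.sum_mul_sum]
    exact Finset.sum_congr rfl fun i _ => Finset.sum_congr rfl fun j _ => by ring
  have h₃ : ∑ i, (d i * ∑ j, d j) * ‖v i‖ = (∑ i, d i * ‖v i‖) * ∑ j, d j := by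
    rw [Finset.sum_mul]
    exact Finset.sum_congr rfl fun i _ => by ring
  have h₄ : ∑ i, (∑ j, d j) * d i * ‖v i‖ = (∑ i, d i * ‖v i‖) * ∑ j, d j := by
    rw [Finset.sum_mul]
    exact Finset.sum_congr rfl fun i _ => by ring
  linarith

theorem posSemidef_exp_neg_mul_norm_sub (v : ι → E) {γ : ℝ} (hγ : 0 ≤ γ) :
    (of fun i j => Real.exp (-γ * ‖v i - v j‖)).PosSemidef := by
  convert posSemidef_of_exp_add_add ((posSemidef_norm_add_norm_sub_norm_sub v).smul hγ)
    (fun i => -γ * ‖v i‖) using 1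
  ext i j
  simp only [of_apply, Matrix.smul_apply, smul_eq_mul]
  ring_nf

end InnerProductSpace

section Quantile

variable {μ : Measure ℝ} {s : ℝ}

theorem bddBelow_setOf_le_cdf (hs : 0 < s) : BddBelow {t | s ≤ cdf μ t} := by
  obtain ⟨t₀, ht₀⟩ :=
    Filter.eventually_atBot.1 ((tendsto_cdf_atBot μ).eventually (gt_mem_nhds hs))
  exact ⟨t₀, fun t ht => le_of_not_gt fun hlt => (ht₀ t hlt.le).not_ge ht⟩

theorem nonempty_setOf_le_cdf [IsProbabilityMeasure μ] (hs : s < 1) :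
    {t | s ≤ cdf μ t}.Nonempty :=
  ((tendsto_cdf_atTop μ).eventually (le_mem_nhds hs)).exists

theorem monotoneOn_quantileFn [IsProbabilityMeasure μ] : MonotoneOn (quantileFn μ) (Ioo 0 1) :=
  fun _ hs _ hs' hss' =>
    csInf_le_csInf (bddBelow_setOf_le_cdf hs.1) (nonempty_setOf_le_cdf hs'.2) fun _ ht =>
      hss'.trans ht

theorem quantileFn_mem_Icc [IsProbabilityMeasure μ] {a b : ℝ} (hμ : μ (Icc a b)ᶜ = 0)
    (hs : s ∈ Ioo 0 1) : quantileFn μ s ∈ Icc a b := by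
  refine ⟨le_csInf (nonempty_setOf_le_cdf hs.2) fun t ht => le_of_not_gt fun hta => ?_,
    csInf_le (bddBelow_setOf_le_cdf hs.1) ?_⟩
  · have hnull : μ (Iic t) = 0 :=
      measure_mono_null (fun x (hx : x ≤ t) (hx' : x ∈ Icc a b) => (hx'.1.trans hx).not_gt hta)
        hμ
    have : cdf μ t = 0 := by rw [cdf_eq_real, measureReal_def, hnull, ENNReal.toReal_zero]
    exact hs.1.not_ge (this ▸ ht)
  · have hnull : μ (Iic b)ᶜ = 0 :=
      measure_mono_null (compl_subset_compl.2 Icc_subset_Iic_self) hμ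
    have : cdf μ b = 1 := by
      rw [cdf_eq_real, measureReal_def, (prob_compl_eq_zero_iff measurableSet_Iic).1 hnull,
        ENNReal.toReal_one]
    exact (this.symm ▸ hs.2.le : s ≤ cdf μ b)

theorem memLp_quantileFn [IsProbabilityMeasure μ] {a b : ℝ} (hμ : μ (Icc a b)ᶜ = 0) :
    MemLp (quantileFn μ) 2 (volume.restrict (Ioo 0 1)) :=
  MemLp.of_bound (aemeasurable_restrict_of_monotoneOn measurableSet_Ioo
      monotoneOn_quantileFn).aestronglyMeasurable (max |a| |b|)
    ((ae_restrict_iff' measurableSet_Ioo).2 (Filter.Eventually.of_forall fun _ hs =>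
      abs_le_max_abs_abs (quantileFn_mem_Icc hμ hs).1 (quantileFn_mem_Icc hμ hs).2))

end Quantile

theorem wassersteinDist_eq_norm_toLp_sub {μ ν : Measure ℝ}
    (hμ : MemLp (quantileFn μ) 2 (volume.restrict (Ioo 0 1)))
    (hν : MemLp (quantileFn ν) 2 (volume.restrict (Ioo 0 1))) :
    wassersteinDist μ ν = ‖hμ.toLp - hν.toLp‖ := by
  rw [wassersteinDist, ← MemLp.toLp_sub, ← Real.sqrt_sq (norm_nonneg _),
    ← real_inner_self_eq_norm_sq, L2.inner_def]
  congr 1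
  refine integral_congr_ae ?_
  filter_upwards [(hμ.sub hν).coeFn_toLp] with s hs
  simp [hs, sq]

theorem wasserstein_gaussian_and_laplacian_kernels_posdef_general
    (a b : ℝ) (γ : ℝ) (hγ : 0 < γ)
    (m : ℕ) (μs : Fin m → Measure ℝ)
    (hprob : ∀ i, IsProbabilityMeasure (μs i))
    (hsupp : ∀ i, μs i (Set.Icc a b)ᶜ = 0)
    (c : Fin m → ℝ) :
    0 ≤ ∑ i, ∑ j, c i * c j * Real.exp (-γ * wassersteinDist (μs i) (μs j) ^ 2) ∧
      0 ≤ ∑ i, ∑ j, c i * c j * Real.exp (-γ * wassersteinDist (μs i) (μs j)) := by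
  have := hprob
  let v i := (memLp_quantileFn (hsupp i)).toLp
  have hdist (i j : Fin m) : wassersteinDist (μs i) (μs j) = ‖v i - v j‖ :=
    wassersteinDist_eq_norm_toLp_sub _ _
  simp only [hdist]
  exact ⟨(posSemidef_exp_neg_mul_norm_sub_sq v hγ.le).sum_sum_mul_mul_nonneg c,
    (posSemidef_exp_neg_mul_norm_sub v hγ.le).sum_sum_mul_mul_nonneg c⟩

/-- Proposition 3. On (any compact subset of) the Wasserstein space
`W₂(I)` over a compact interval `I = [a,b]`, for any `γ > 0` both the Gaussian-type
kernel `exp(-γ d_W(μ,ν)²)` and the Laplacian-type kernel `exp(-γ d_W(μ,ν))` are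
positive definite kernels: all their finite quadratic forms are nonnegative. -/
theorem wasserstein_gaussian_and_laplacian_kernels_posdef
    (a b : ℝ) (hab : a ≤ b) (γ : ℝ) (hγ : 0 < γ)
    (m : ℕ) (μs : Fin m → Measure ℝ)
    (hprob : ∀ i, IsProbabilityMeasure (μs i))
    (hsupp : ∀ i, μs i (Set.Icc a b)ᶜ = 0)
    (hmom : ∀ i, MeasureTheory.MemLp id 2 (μs i))
    (c : Fin m → ℝ) :
    0 ≤ ∑ i, ∑ j, c i * c j * Real.exp (-γ * wassersteinDist (μs i) (μs j) ^ 2) ∧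
      0 ≤ ∑ i, ∑ j, c i * c j * Real.exp (-γ * wassersteinDist (μs i) (μs j)) :=
  wasserstein_gaussian_and_laplacian_kernels_posdef_general a b γ hγ m μs hprob hsupp c
end

section
/- The log-Euclidean distance d_log(A, B) = ‖log(A) - log(B)‖_F defines a metric on Sym⁺(r), and for any γ > 0, the kernels κ_{G,log}(A,B) = exp(-γ d_log(A,B)²) and κ_{L,log}(A,B) = exp(-γ d_log(A,B)) are positive definite kernels on Sym⁺(r). -/
/-!
Since `log` is injective and `d_log(A, B)` is the Euclidean distance between `log A` and `log B`
read as vectors of `ℝ^(r × r)`, `d_log` is a metric.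

For the kernels we use Schoenberg's theorem: `exp (-γ ψ)` is positive definite whenever `ψ` is
conditionally negative definite. Centering `ψ` at a base point `x₀` gives a positive definite
kernel `K`; the exponential of a positive definite kernel is positive definite (Schur product
theorem and the power series), and `exp (-γ ψ)` is `exp (γ K)` rescaled by a positive function.
In a Hilbert space `‖x - y‖²` is conditionally negative definite, and so is
`‖x - y‖ = (‖x - y‖²) ^ (1/2)`: for `0 < p < 1`,
`ψ ^ p = C⁻¹ ∫₀^∞ (1 - exp (-t ψ)) t ^ (-(1 + p)) dt` is a mixture of the conditionally negative
definite kernels `1 - exp (-t ψ)`.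
-/

open Matrix

noncomputable def frobNormSq {r : ℕ} (M : Matrix (Fin r) (Fin r) ℝ) : ℝ :=
  Matrix.trace (M.transpose * M)

open Finset Filter Topology Real

section Kernels

variable {X : Type*}

structure IsPosDefKernel (k : X → X → ℝ) : Prop where
  symm : ∀ x y, k x y = k y x
  quadForm_nonneg : ∀ (m : ℕ) (x : Fin m → X) (c : Fin m → ℝ),
    0 ≤ ∑ i, ∑ j, c i * c j * k (x i) (x j)

structure IsCondNegDefKernel (ψ : X → X → ℝ) : Prop where
  symm : ∀ x y, ψ x y = ψ y x
  quadForm_nonpos : ∀ (m : ℕ) (x : Fin m → X) (c : Fin m → ℝ), ∑ i, c i = 0 →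
    ∑ i, ∑ j, c i * c j * ψ (x i) (x j) ≤ 0

lemma Matrix.star_dotProduct_of_mulVec {ι : Type*} [Fintype ι] (K : ι → ι → ℝ) (c : ι → ℝ) :
    star c ⬝ᵥ (of K *ᵥ c) = ∑ i, ∑ j, c i * c j * K i j := by
  simp only [dotProduct, mulVec, of_apply, star_trivial, mul_sum]
  exact sum_congr rfl fun i _ => sum_congr rfl fun j _ => by ring

namespace IsPosDefKernel

variable {k l : X → X → ℝ}

lemma posSemidef (hk : IsPosDefKernel k) {m : ℕ} (x : Fin m → X) :
    (of fun i j => k (x i) (x j)).PosSemidef := by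
  refine posSemidef_iff_dotProduct_mulVec.2 ⟨?_, fun c => ?_⟩
  · ext i j
    exact hk.symm (x j) (x i)
  · rw [Matrix.star_dotProduct_of_mulVec]
    exact hk.quadForm_nonneg m x c

lemma const {a : ℝ} (ha : 0 ≤ a) : IsPosDefKernel fun _ _ : X => a where
  symm _ _ := rfl
  quadForm_nonneg m x c := by
    have h : ∑ i, ∑ j, c i * c j * a = a * (∑ i, c i) ^ 2 := by
      rw [sq, sum_mul_sum, mul_sum]
      exact sum_congr rfl fun i _ => by rw [mul_sum]; exact sum_congr rfl fun j _ => by ring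
    rw [h]
    positivity

lemma mul (hk : IsPosDefKernel k) (hl : IsPosDefKernel l) :
    IsPosDefKernel fun x y => k x y * l x y where
  symm x y := by rw [hk.symm, hl.symm]
  quadForm_nonneg m x c := by
    rw [← Matrix.star_dotProduct_of_mulVec]
    exact ((hk.posSemidef x).hadamard (hl.posSemidef x)).dotProduct_mulVec_nonneg c

lemma add (hk : IsPosDefKernel k) (hl : IsPosDefKernel l) :
    IsPosDefKernel fun x y => k x y + l x y where
  symm x y := by rw [hk.symm, hl.symm]
  quadForm_nonneg m x c := by
    simp only [mul_add, sum_add_distrib]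
    exact add_nonneg (hk.quadForm_nonneg m x c) (hl.quadForm_nonneg m x c)

lemma pow (hk : IsPosDefKernel k) (n : ℕ) : IsPosDefKernel fun x y => k x y ^ n := by
  induction n with
  | zero => simpa using const (X := X) zero_le_one
  | succ n ih => simpa only [pow_succ] using ih.mul hk

lemma sum {ι : Type*} {k : ι → X → X → ℝ} (s : Finset ι) (hk : ∀ n ∈ s, IsPosDefKernel (k n)) :
    IsPosDefKernel fun x y => ∑ n ∈ s, k n x y := by
  classical
  induction s using Finset.induction_on with
  | empty => simpa using const (X := X) le_rfl
  | insert a s ha ih =>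
    simp only [sum_insert ha]
    exact (hk a (mem_insert_self a s)).add (ih fun n hn => hk n (mem_insert_of_mem hn))

lemma of_tendsto {k : ℕ → X → X → ℝ} {K : X → X → ℝ} (hk : ∀ n, IsPosDefKernel (k n))
    (hK : ∀ x y, Tendsto (fun n => k n x y) atTop (𝓝 (K x y))) : IsPosDefKernel K where
  symm x y := tendsto_nhds_unique (hK x y) (by simpa only [(hk _).symm x y] using hK y x)
  quadForm_nonneg m x c :=
    ge_of_tendsto' (tendsto_finsetSum _ fun i _ => tendsto_finsetSum _ fun j _ =>
      (hK (x i) (x j)).const_mul (c i * c j)) fun n => (hk n).quadForm_nonneg m x c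

lemma exp (hk : IsPosDefKernel k) : IsPosDefKernel fun x y => Real.exp (k x y) := by
  refine of_tendsto (k := fun N x y => ∑ n ∈ range N, k x y ^ n * (n.factorial : ℝ)⁻¹)
    (fun N => sum _ fun n _ => (hk.pow n).mul (const (by positivity))) fun x y => ?_
  simpa only [Real.exp_eq_exp_ℝ, div_eq_mul_inv] using
    (NormedSpace.expSeries_div_hasSum_exp (k x y)).tendsto_sum_nat

lemma mul_apply_mul (hk : IsPosDefKernel k) (f : X → ℝ) :
    IsPosDefKernel fun x y => f x * f y * k x y where
  symm x y := by rw [hk.symm]; ring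
  quadForm_nonneg m x c := by
    convert hk.quadForm_nonneg m x (fun i => c i * f (x i)) using 3 with i _ j _
    ring

end IsPosDefKernel

namespace IsCondNegDefKernel

variable {ψ : X → X → ℝ}

lemma isPosDefKernel_centered (hψ : IsCondNegDefKernel ψ) (x₀ : X) :
    IsPosDefKernel fun x y => ψ x x₀ + ψ y x₀ - ψ x y - ψ x₀ x₀ where
  symm x y := by rw [hψ.symm x y]; ring
  quadForm_nonneg m x c := by
    have h := hψ.quadForm_nonpos (m + 1) (Fin.cons x₀ x) (Fin.cons (-∑ i, c i) c)
      (by simp [Fin.sum_cons])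
    have row (f : Fin m → ℝ) : ∑ i, ∑ j, c i * c j * f i = (∑ i, c i * f i) * ∑ j, c j := by
      rw [sum_mul_sum]; exact sum_congr rfl fun i _ => sum_congr rfl fun j _ => by ring
    have col (f : Fin m → ℝ) : ∑ i, ∑ j, c i * c j * f j = (∑ i, c i) * ∑ j, c j * f j := by
      rw [sum_mul_sum]; exact sum_congr rfl fun i _ => sum_congr rfl fun j _ => by ring
    simp only [Fin.sum_univ_succ, Fin.cons_zero, Fin.cons_succ, hψ.symm x₀] at h
    simp only [mul_add, mul_sub, sum_add_distrib, sum_sub_distrib, row, col] at h ⊢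
    simp only [neg_mul, mul_neg, sum_neg_distrib, mul_comm (c _) (∑ i, c i), mul_assoc,
      ← mul_sum, ← sum_mul] at h ⊢
    linarith

lemma isPosDefKernel_exp_neg_mul (hψ : IsCondNegDefKernel ψ) {γ : ℝ} (hγ : 0 ≤ γ) :
    IsPosDefKernel fun x y => Real.exp (-γ * ψ x y) where
  symm x y := by rw [hψ.symm]
  quadForm_nonneg
  | 0, _, _ => by simp
  | m + 1, x, c => by
    set x₀ := x 0
    -- `exp (-γ ψ x y) = exp (γ ψ x₀ x₀) * f x * f y * exp (γ K x y)` with `K` centered at `x₀`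
    -- and `f x = exp (-γ ψ x x₀)`
    have h := ((((IsPosDefKernel.const hγ).mul (hψ.isPosDefKernel_centered x₀)).exp.mul_apply_mul
      fun x => Real.exp (-γ * ψ x x₀)).mul (.const (Real.exp_pos (γ * ψ x₀ x₀)).le)).quadForm_nonneg
      _ x c
    convert h using 4 with i _ j _
    simp only [← Real.exp_add]
    ring_nf

end IsCondNegDefKernel

end Kernels

section FractionalPower

open MeasureTheory Set

variable {p : ℝ}

lemma integrableOn_one_sub_exp_neg_mul_mul_rpow {a : ℝ} (ha : 0 ≤ a) (hp0 : 0 < p) (hp1 : p < 1) :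
    IntegrableOn (fun t => (1 - exp (-(a * t))) * t ^ (-(1 + p))) (Ioi 0) := by
  have hmeas : AEStronglyMeasurable (fun t => (1 - exp (-(a * t))) * t ^ (-(1 + p))) := by
    fun_prop
  have hnonneg (t : ℝ) (ht : 0 < t) : 0 ≤ (1 - exp (-(a * t))) * t ^ (-(1 + p)) :=
    mul_nonneg (sub_nonneg.2 (exp_le_one_iff.2 (by nlinarith))) (rpow_nonneg ht.le _)
  rw [← Ioc_union_Ioi_eq_Ioi zero_le_one]
  refine IntegrableOn.union ?_ ?_
  · have hsmall := (intervalIntegral.intervalIntegrable_rpow' (a := 0) (b := 1)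
      (by linarith : -1 < -p)).1
    refine (hsmall.const_mul a).mono' hmeas.restrict (ae_restrict_of_forall_mem measurableSet_Ioc fun t ht => ?_)
    rw [norm_of_nonneg (hnonneg t ht.1)]
    calc (1 - exp (-(a * t))) * t ^ (-(1 + p)) ≤ a * t * t ^ (-(1 + p)) :=
          mul_le_mul_of_nonneg_right (by linarith [add_one_le_exp (-(a * t))])
            (rpow_nonneg ht.1.le _)
      _ = a * t ^ (-p) := by
          rw [mul_assoc, ← rpow_one_add' ht.1.le (by linarith)]; ring_nf
  · refine (integrableOn_Ioi_rpow_of_lt (by linarith : -(1 + p) < -1) zero_lt_one).mono'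
      hmeas.restrict (ae_restrict_of_forall_mem measurableSet_Ioi fun t ht => ?_)
    have ht₀ : (0 : ℝ) < t := zero_lt_one.trans ht
    rw [norm_of_nonneg (hnonneg t ht₀)]
    exact mul_le_of_le_one_left (rpow_nonneg ht₀.le _) (by linarith [exp_pos (-(a * t))])

lemma integral_one_sub_exp_neg_mul_mul_rpow {a : ℝ} (ha : 0 ≤ a) (hp : 0 < p) :
    ∫ t in Ioi 0, (1 - exp (-(a * t))) * t ^ (-(1 + p)) =
      a ^ p * ∫ t in Ioi 0, (1 - exp (-t)) * t ^ (-(1 + p)) := by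
  rcases ha.eq_or_lt with rfl | ha
  · simp [zero_rpow hp.ne']
  set g : ℝ → ℝ := fun t => (1 - exp (-t)) * t ^ (-(1 + p))
  have hscale : ∀ t ∈ Ioi (0 : ℝ),
      (1 - exp (-(a * t))) * t ^ (-(1 + p)) = a ^ (1 + p) * g (a * t) := by
    intro t ht
    simp only [g, mul_rpow ha.le (le_of_lt ht), rpow_neg ha.le]
    field_simp
  calc ∫ t in Ioi 0, (1 - exp (-(a * t))) * t ^ (-(1 + p))
      = a ^ (1 + p) * ∫ t in Ioi 0, g (a * t) := by
        rw [setIntegral_congr_fun measurableSet_Ioi hscale, integral_const_mul]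
    _ = a ^ p * ∫ t in Ioi 0, g t := by
        rw [integral_comp_mul_left_Ioi g 0 ha, mul_zero, smul_eq_mul,
          rpow_one_add' ha.le (by linarith)]
        field_simp

lemma integral_one_sub_exp_neg_mul_rpow_pos (hp0 : 0 < p) (hp1 : p < 1) :
    0 < ∫ t in Ioi 0, (1 - exp (-t)) * t ^ (-(1 + p)) := by
  have hpos : ∀ t ∈ Ioi (0 : ℝ), 0 < (1 - exp (-t)) * t ^ (-(1 + p)) := fun t ht =>
    mul_pos (sub_pos.2 (exp_lt_one_iff.2 (neg_lt_zero.2 ht))) (rpow_pos_of_pos ht _)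
  rw [setIntegral_pos_iff_support_of_nonneg_ae
    (ae_restrict_of_forall_mem measurableSet_Ioi fun t ht => (hpos t ht).le)
    (by simpa using integrableOn_one_sub_exp_neg_mul_mul_rpow zero_le_one hp0 hp1),
    inter_eq_right.2 fun t ht => Function.mem_support.2 (hpos t ht).ne']
  simp

lemma IsCondNegDefKernel.rpow {X : Type*} {ψ : X → X → ℝ} (hψ : IsCondNegDefKernel ψ)
    (hψ0 : ∀ x y, 0 ≤ ψ x y) (hp0 : 0 < p) (hp1 : p < 1) :
    IsCondNegDefKernel fun x y => ψ x y ^ p where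
  symm x y := by rw [hψ.symm]
  quadForm_nonpos m x c hc := by
    set C := ∫ t in Ioi 0, (1 - exp (-t)) * t ^ (-(1 + p))
    set F : ℝ → Fin m → Fin m → ℝ := fun t i j =>
      c i * c j * ((1 - exp (-(ψ (x i) (x j) * t))) * t ^ (-(1 + p)))
    have hF : ∀ t ∈ Ioi (0 : ℝ), ∑ i, ∑ j, F t i j ≤ 0 := by
      intro t ht
      have hexp : 0 ≤ ∑ i, ∑ j, c i * c j * exp (-(ψ (x i) (x j) * t)) := by
        simpa only [neg_mul, mul_comm t] using
          (hψ.isPosDefKernel_exp_neg_mul (le_of_lt ht)).quadForm_nonneg m x c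
      have hsplit : ∑ i, ∑ j, F t i j = t ^ (-(1 + p)) * ((∑ i, c i) * ∑ j, c j) -
          t ^ (-(1 + p)) * ∑ i, ∑ j, c i * c j * exp (-(ψ (x i) (x j) * t)) := by
        rw [sum_mul_sum, mul_sum, mul_sum, ← sum_sub_distrib]
        refine sum_congr rfl fun i _ => ?_
        rw [mul_sum, mul_sum, ← sum_sub_distrib]
        exact sum_congr rfl fun j _ => by ring
      rw [hsplit, hc, zero_mul, mul_zero, zero_sub, neg_nonpos]
      exact mul_nonneg (rpow_nonneg (le_of_lt ht) _) hexp
    have hrep : (∑ i, ∑ j, c i * c j * ψ (x i) (x j) ^ p) * C =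
        ∫ t in Ioi 0, ∑ i, ∑ j, F t i j := by
      have hint : ∀ i j, IntegrableOn (fun t => F t i j) (Ioi 0) := fun i j =>
        (integrableOn_one_sub_exp_neg_mul_mul_rpow (hψ0 (x i) (x j)) hp0 hp1).const_mul _
      rw [integral_finsetSum _ fun i _ => integrable_finsetSum _ fun j _ => hint i j, sum_mul]
      refine sum_congr rfl fun i _ => ?_
      rw [integral_finsetSum _ fun j _ => hint i j, sum_mul]
      refine sum_congr rfl fun j _ => ?_
      rw [integral_const_mul, integral_one_sub_exp_neg_mul_mul_rpow (hψ0 (x i) (x j)) hp0]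
      ring
    exact nonpos_of_mul_nonpos_left (hrep ▸ setIntegral_nonpos measurableSet_Ioi hF)
      (integral_one_sub_exp_neg_mul_rpow_pos hp0 hp1)

end FractionalPower

section InnerProductSpace

variable {E : Type*} [NormedAddCommGroup E] [InnerProductSpace ℝ E]

lemma isCondNegDefKernel_dist_sq : IsCondNegDefKernel fun x y : E => dist x y ^ 2 where
  symm x y := by rw [dist_comm]
  quadForm_nonpos m x c hc := by
    have h := inner_sum_smul_sum_smul_of_sum_eq_zero x hc x hc
    have h0 := real_inner_self_nonneg (x := ∑ i, c i • x i)
    simp only [dist_eq_norm, sq]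
    linarith

lemma isCondNegDefKernel_dist : IsCondNegDefKernel fun x y : E => dist x y := by
  convert (isCondNegDefKernel_dist_sq (E := E)).rpow (fun _ _ => sq_nonneg _) one_half_pos
    one_half_lt_one using 3 with x y
  rw [← sqrt_eq_rpow, sqrt_sq dist_nonneg]

end InnerProductSpace

lemma frobNormSq_eq_norm_sq {r : ℕ} (M : Matrix (Fin r) (Fin r) ℝ) :
    frobNormSq M = ‖WithLp.toLp 2 (Function.uncurry M)‖ ^ 2 := by
  rw [EuclideanSpace.norm_sq_eq, frobNormSq, trace, Fintype.sum_prod_type, sum_comm]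
  simp only [diag_apply, mul_apply, transpose_apply, Real.norm_eq_abs, sq_abs]
  simp only [sq]
  rfl

theorem logEuclidean_metric_and_kernels_posdef_general (r : ℕ)
    (mlog : {A : Matrix (Fin r) (Fin r) ℝ // A.IsSymm ∧ A.PosDef} → Matrix (Fin r) (Fin r) ℝ)
    (hinj : Function.Injective mlog)
    (dlog : {A : Matrix (Fin r) (Fin r) ℝ // A.IsSymm ∧ A.PosDef} →
      {A : Matrix (Fin r) (Fin r) ℝ // A.IsSymm ∧ A.PosDef} → ℝ)
    (hdlog : ∀ A B, dlog A B = Real.sqrt (frobNormSq (mlog A - mlog B))) :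
    (∀ A B, 0 ≤ dlog A B) ∧
    (∀ A B, dlog A B = 0 ↔ A = B) ∧
    (∀ A B, dlog A B = dlog B A) ∧
    (∀ A B C, dlog A C ≤ dlog A B + dlog B C) ∧
    ∀ γ : ℝ, 0 < γ →
      ∀ (m : ℕ) (Y : Fin m → {A : Matrix (Fin r) (Fin r) ℝ // A.IsSymm ∧ A.PosDef})
        (c : Fin m → ℝ),
        0 ≤ ∑ i, ∑ j, c i * c j * Real.exp (-γ * dlog (Y i) (Y j) ^ 2) ∧
        0 ≤ ∑ i, ∑ j, c i * c j * Real.exp (-γ * dlog (Y i) (Y j)) := by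
  set e : _ → EuclideanSpace ℝ (Fin r × Fin r) := fun A => WithLp.toLp 2 (Function.uncurry (mlog A))
  have he : Function.Injective e := fun A B h =>
    hinj (Function.uncurry_injective (WithLp.toLp_injective 2 h))
  have hdist : ∀ A B, dlog A B = dist (e A) (e B) := fun A B => by
    rw [hdlog, frobNormSq_eq_norm_sq, sqrt_sq (norm_nonneg _), dist_eq_norm]
    rfl
  simp only [hdist]
  refine ⟨fun A B => dist_nonneg, fun A B => dist_eq_zero.trans he.eq_iff,
    fun A B => dist_comm _ _, fun A B C => dist_triangle _ _ _, fun γ hγ m Y c => ⟨?_, ?_⟩⟩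
  · exact (isCondNegDefKernel_dist_sq.isPosDefKernel_exp_neg_mul hγ.le).quadForm_nonneg m (e ∘ Y) c
  · exact (isCondNegDefKernel_dist.isPosDefKernel_exp_neg_mul hγ.le).quadForm_nonneg m (e ∘ Y) c

/-- Let `mlog` be the (symmetric) matrix logarithm, a bijection from
`Sym⁺(r)` onto `Sym(r)`. The log-Euclidean distance
`d_log(A,B) = ‖log A - log B‖_F` is a metric on `Sym⁺(r)` (nonnegative, zero iff equal,
symmetric, triangle inequality), and for every `γ > 0` the kernels
`exp(-γ d_log(A,B)²)` and `exp(-γ d_log(A,B))` are positive definite on `Sym⁺(r)`. -/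
theorem logEuclidean_metric_and_kernels_posdef (r : ℕ)
    (mlog : {A : Matrix (Fin r) (Fin r) ℝ // A.IsSymm ∧ A.PosDef} → Matrix (Fin r) (Fin r) ℝ)
    (hsymm : ∀ A, (mlog A).IsSymm)
    (hinj : Function.Injective mlog)
    (hsurj : ∀ L : Matrix (Fin r) (Fin r) ℝ, L.IsSymm → ∃ A, mlog A = L)
    (dlog : {A : Matrix (Fin r) (Fin r) ℝ // A.IsSymm ∧ A.PosDef} →
      {A : Matrix (Fin r) (Fin r) ℝ // A.IsSymm ∧ A.PosDef} → ℝ)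
    (hdlog : ∀ A B, dlog A B = Real.sqrt (frobNormSq (mlog A - mlog B))) :
    (∀ A B, 0 ≤ dlog A B) ∧
    (∀ A B, dlog A B = 0 ↔ A = B) ∧
    (∀ A B, dlog A B = dlog B A) ∧
    (∀ A B C, dlog A C ≤ dlog A B + dlog B C) ∧
    ∀ γ : ℝ, 0 < γ →
      ∀ (m : ℕ) (Y : Fin m → {A : Matrix (Fin r) (Fin r) ℝ // A.IsSymm ∧ A.PosDef})
        (c : Fin m → ℝ),
        0 ≤ ∑ i, ∑ j, c i * c j * Real.exp (-γ * dlog (Y i) (Y j) ^ 2) ∧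
        0 ≤ ∑ i, ∑ j, c i * c j * Real.exp (-γ * dlog (Y i) (Y j)) :=
  logEuclidean_metric_and_kernels_posdef_general r mlog hinj dlog hdlog
end

section
/- The exponent 2 is critical for Gaussian geodesic kernels on the sphere: there exists γ > 0 and points y_1, ..., y_m on S^n (n ≥ 1) together with real coefficients c_1, ..., c_m such that Σ_{i,j} c_i c_j exp(-γ d_g(y_i, y_j)²) < 0; that is, exp(-γ d_g(·,·)²) with d_g the geodesic (arc-cosine) distance is not positive semidefinite on S^n. -/
open scoped RealInnerProductSpace

open Real Metric Module

/-!
On a great circle through orthogonal unit vectors `u`, `v`, the points `u, -u, v, -v` are at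
geodesic distance `π/2` from their neighbours and `π` from their antipodes, so `d_g²` takes the
values `π²/4` and `π² = 4 · π²/4`: the geodesic square is "too long" to be Euclidean. With
weights `1, 1, -1, -1` the quadratic form of `exp(-γ d_g²)` is `4 (1 - 2b + b⁴)` for
`b = exp(-γ π²/4)`, and `1 - 2b + b⁴ = (1 - b)(1 - b - b² - b³) < 0` as soon as `b` is close
to `1`. Taking `γ = 1/π²` gives `b = exp(-1/4) ≥ 3/4`.
-/

variable {E : Type*} [NormedAddCommGroup E] [InnerProductSpace ℝ E]

theorem exists_sphere_inner_eq_zero [FiniteDimensional ℝ E] (hE : 1 < finrank ℝ E) :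
    ∃ u v : sphere (0 : E) 1, ⟪(u : E), v⟫ = 0 := by
  have hb := (stdOrthonormalBasis ℝ E).orthonormal
  refine ⟨⟨_, mem_sphere_zero_iff_norm.2 (hb.1 ⟨0, by omega⟩)⟩,
    ⟨_, mem_sphere_zero_iff_norm.2 (hb.1 ⟨1, hE⟩)⟩, hb.2 ?_⟩
  simp

theorem sum_sum_antipodal_pairs_eq (φ : ℝ → ℝ) {u v : sphere (0 : E) 1}
    (huv : ⟪(u : E), v⟫ = 0) :
    ∑ i, ∑ j, ![1, 1, -1, -1] i * ![1, 1, -1, -1] j *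
        φ ⟪(![u, -u, v, -v] i : E), (![u, -u, v, -v] j : E)⟫ =
      4 * (φ 1 + φ (-1) - 2 * φ 0) := by
  have hvu : ⟪(v : E), u⟫ = 0 := by rwa [real_inner_comm]
  simp only [Fin.sum_univ_four, Matrix.cons_val_zero, Matrix.cons_val_one, Matrix.cons_val_two,
    Matrix.cons_val_three, Matrix.head_cons, Matrix.tail_cons, coe_neg_sphere, inner_neg_left,
    inner_neg_right, neg_neg, real_inner_self_eq_norm_sq, norm_eq_of_mem_sphere, huv, hvu,
    neg_zero]
  ring_nf

theorem one_add_exp_neg_one_lt_two_mul_exp_neg_quarter : 1 + exp (-1) < 2 * exp (-(1 / 4)) := by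
  set b := exp (-(1 / 4))
  have hb4 : exp (-1) = b ^ 4 := by rw [← exp_nat_mul]; norm_num
  have hb_ge : 3 / 4 ≤ b := by linarith [add_one_le_exp (-(1 / 4) : ℝ)]
  have hb_lt : b < 1 := exp_lt_one_iff.2 (by norm_num)
  have hfactor : 1 + b ^ 4 - 2 * b = -((1 - b) * (b + b ^ 2 + b ^ 3 - 1)) := by ring
  have hpos : 0 < (1 - b) * (b + b ^ 2 + b ^ 3 - 1) := mul_pos (by linarith) (by nlinarith)
  rw [hb4]
  linarith

/-- The Gaussian-type kernel built from the squared geodesic distance,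
`exp(-γ d_g(y,y')²)` with `d_g(y,y') = arccos⟪y,y'⟫`, is *not* positive semidefinite on
the sphere `S^n` for `n ≥ 1`: there exist `γ > 0`, finitely many points `y₁,…,y_m` on
`S^n` and real coefficients `c₁,…,c_m` with
`Σ_{i,j} c_i c_j exp(-γ d_g(y_i,y_j)²) < 0`. -/
theorem sphere_gaussian_geodesic_kernel_not_psd (n : ℕ) (hn : 1 ≤ n) :
    ∃ γ : ℝ, 0 < γ ∧
      ∃ (m : ℕ) (y : Fin m → Metric.sphere (0 : EuclideanSpace ℝ (Fin (n + 1))) 1)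
        (c : Fin m → ℝ),
        (∑ i, ∑ j, c i * c j *
          Real.exp (-γ * Real.arccos ⟪(y i : EuclideanSpace ℝ (Fin (n + 1))), (y j : EuclideanSpace ℝ (Fin (n + 1)))⟫ ^ 2)) < 0 := by
  obtain ⟨u, v, huv⟩ := exists_sphere_inner_eq_zero (E := EuclideanSpace ℝ (Fin (n + 1)))
    (by rw [finrank_euclideanSpace_fin]; omega)
  refine ⟨1 / π ^ 2, by positivity, 4, ![u, -u, v, -v], ![1, 1, -1, -1], ?_⟩
  rw [sum_sum_antipodal_pairs_eq (fun t ↦ exp (-(1 / π ^ 2) * arccos t ^ 2)) huv]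
  have hπ : π ≠ 0 := pi_ne_zero
  have h_antipodal : -(1 / π ^ 2) * arccos (-1) ^ 2 = -1 := by
    rw [arccos_neg_one]; field_simp
  have h_orthogonal : -(1 / π ^ 2) * arccos 0 ^ 2 = -(1 / 4) := by
    rw [arccos_zero]; field_simp; ring
  simp only [arccos_one, h_antipodal, h_orthogonal]
  norm_num
  linarith [one_add_exp_neg_one_lt_two_mul_exp_neg_quarter]
end

section
/- Ensemble averaging achieves exhaustiveness under positivity and continuity: let (Ω_Y, d) be a metric space, P_Y a strictly positive Borel measure on Ω_Y (every nonempty open set has positive measure), and y ↦ M_0(y) a continuous map into the positive semidefinite p×p matrices with span{span(M_0(y)) : y ∈ Ω_Y} = S and ‖M_0(y)‖ ≤ G(y) integrable. Then the matrix M = ∫ M_0(y) dP_Y(y) satisfies span(M) = S. -/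
/-!
Averaging can only lose directions `v` with `vᵀ M₀(y) v = 0` for all `y`: if `M v = 0` then
`∫ vᵀ M₀(y) v dP_Y = 0`, the integrand is continuous and nonnegative and `P_Y` charges every
nonempty open set, so `vᵀ M₀(y) v = 0` everywhere, whence `M₀(y) v = 0` by positive
semidefiniteness. Thus `ker M = ⋂_y ker M₀(y)`, and since all these matrices are symmetric,
taking orthogonal complements gives `span(M) = ∑_y span(M₀(y)) = S`.
-/

open MeasureTheory Matrix

attribute [local instance] Matrix.normedAddCommGroup Matrix.normedSpace

theorem LinearMap.IsSymmetric.range_eq_iSup_range_of_ker_eq_iInf_ker {𝕜 E ι : Type*} [RCLike 𝕜]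
    [NormedAddCommGroup E] [InnerProductSpace 𝕜 E] [FiniteDimensional 𝕜 E]
    {T : E →ₗ[𝕜] E} {U : ι → E →ₗ[𝕜] E} (hT : T.IsSymmetric) (hU : ∀ i, (U i).IsSymmetric)
    (hker : LinearMap.ker T = ⨅ i, LinearMap.ker (U i)) :
    LinearMap.range T = ⨆ i, LinearMap.range (U i) := by
  rw [← Submodule.orthogonal_orthogonal (LinearMap.range T), hT.orthogonal_range, hker,
    ← Submodule.orthogonal_orthogonal (⨆ i, LinearMap.range (U i)), ← Submodule.iInf_orthogonal]
  simp_rw [fun i => (hU i).orthogonal_range]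

theorem Continuous.eq_zero_of_integral_eq_zero_of_nonneg {X : Type*} [TopologicalSpace X]
    [MeasurableSpace X] {μ : Measure X} [μ.IsOpenPosMeasure] {f : X → ℝ} (hf : Continuous f)
    (hf₀ : 0 ≤ f) (hfi : Integrable f μ) (h : ∫ x, f x ∂μ = 0) : f = 0 :=
  (hf.ae_eq_iff_eq μ continuous_const).mp ((integral_eq_zero_iff_of_nonneg hf₀ hfi).mp h)

namespace Matrix

section Euclidean

variable {n 𝕜 : Type*} [Fintype n] [RCLike 𝕜]

theorem range_toEuclideanLin [DecidableEq n] (A : Matrix n n 𝕜) :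
    LinearMap.range A.toEuclideanLin
      = Submodule.orderIsoMapComap (WithLp.linearEquiv 2 𝕜 (n → 𝕜)).symm
          (LinearMap.range A.mulVecLin) := by
  ext x
  simp [Submodule.orderIsoMapComap, toLpLin_apply, WithLp.ext_iff,
    (WithLp.toLp_surjective 2).exists]

theorem ker_toEuclideanLin [DecidableEq n] (A : Matrix n n 𝕜) :
    LinearMap.ker A.toEuclideanLin
      = Submodule.orderIsoMapComap (WithLp.linearEquiv 2 𝕜 (n → 𝕜)).symm
          (LinearMap.ker A.mulVecLin) := by
  ext x
  simp [Submodule.orderIsoMapComap, toLpLin_apply]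

theorem IsHermitian.range_mulVecLin_eq_iSup_of_ker_eq_iInf {ι : Type*} {A : Matrix n n 𝕜}
    {B : ι → Matrix n n 𝕜} (hA : A.IsHermitian) (hB : ∀ i, (B i).IsHermitian)
    (hker : LinearMap.ker A.mulVecLin = ⨅ i, LinearMap.ker (B i).mulVecLin) :
    LinearMap.range A.mulVecLin = ⨆ i, LinearMap.range (B i).mulVecLin := by
  classical
  apply (Submodule.orderIsoMapComap (WithLp.linearEquiv 2 𝕜 (n → 𝕜)).symm).injective
  simp only [OrderIso.map_iSup, ← range_toEuclideanLin]
  refine (isSymmetric_toEuclideanLin_iff.mpr hA).range_eq_iSup_range_of_ker_eq_iInf_ker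
    (fun i => isSymmetric_toEuclideanLin_iff.mpr (hB i)) ?_
  simp only [ker_toEuclideanLin, hker, OrderIso.map_iInf]

end Euclidean

section Integral

variable {X m n : Type*} [MeasurableSpace X] {μ : Measure X} [Fintype m] [Fintype n]

/- The generic instance does not fire here: `Matrix` carries its own `TopologicalSpace` instance,
which is not reducibly the topology of the (local) sup norm. -/
instance {α : Type*} [NormedAddCommGroup α] : ContinuousENorm (Matrix m n α) :=
  SeminormedAddGroup.toContinuousENorm

theorem integral_mulVec {F : X → Matrix m n ℝ} (hF : Integrable F μ) (v : n → ℝ) :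
    (∫ x, F x ∂μ) *ᵥ v = ∫ x, F x *ᵥ v ∂μ :=
  (((mulVecBilin ℝ ℝ).flip v).toContinuousLinearMap.integral_comp_comm hF).symm

theorem _root_.MeasureTheory.Integrable.dotProduct_mulVec {F : X → Matrix m n ℝ}
    (hF : Integrable F μ) (v : m → ℝ) (w : n → ℝ) : Integrable (fun x => v ⬝ᵥ F x *ᵥ w) μ :=
  (dotProductBilin ℝ ℝ v ∘ₗ (mulVecBilin ℝ ℝ).flip w).toContinuousLinearMap.integrable_comp hF

theorem integral_dotProduct_mulVec {F : X → Matrix m n ℝ} (hF : Integrable F μ) (v : m → ℝ)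
    (w : n → ℝ) : v ⬝ᵥ (∫ x, F x ∂μ) *ᵥ w = ∫ x, v ⬝ᵥ F x *ᵥ w ∂μ :=
  ((dotProductBilin ℝ ℝ v ∘ₗ (mulVecBilin ℝ ℝ).flip w).toContinuousLinearMap.integral_comp_comm
    hF).symm

theorem integral_transpose {F : X → Matrix m n ℝ} (hF : Integrable F μ) :
    (∫ x, F x ∂μ)ᵀ = ∫ x, (F x)ᵀ ∂μ :=
  ((transposeLinearEquiv m n ℝ ℝ).toLinearMap.toContinuousLinearMap.integral_comp_comm hF).symm

theorem isHermitian_integral {F : X → Matrix n n ℝ} (hF : Integrable F μ)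
    (hherm : ∀ x, (F x).IsHermitian) : (∫ x, F x ∂μ).IsHermitian := by
  rw [IsHermitian, conjTranspose_eq_transpose_of_trivial, integral_transpose hF]
  exact integral_congr_ae (.of_forall fun x => (hherm x).eq)

theorem ker_integral_eq_iInf_ker [TopologicalSpace X] [μ.IsOpenPosMeasure]
    {F : X → Matrix n n ℝ} (hcont : Continuous F) (hF : Integrable F μ)
    (hpsd : ∀ x, (F x).PosSemidef) :
    LinearMap.ker (∫ x, F x ∂μ).mulVecLin = ⨅ x, LinearMap.ker (F x).mulVecLin := by
  ext v
  simp only [LinearMap.mem_ker, mulVecLin_apply, Submodule.mem_iInf]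
  refine ⟨fun hv x => ?_, fun hv => by simp [integral_mulVec hF, hv]⟩
  have hquad : (fun x => v ⬝ᵥ F x *ᵥ v) = 0 :=
    Continuous.eq_zero_of_integral_eq_zero_of_nonneg (by fun_prop)
      (fun x => by simpa using (hpsd x).dotProduct_mulVec_nonneg v) (hF.dotProduct_mulVec v v)
      (by rw [← integral_dotProduct_mulVec hF, hv, dotProduct_zero])
  exact ((hpsd x).dotProduct_mulVec_zero_iff v).mp (by simpa using congrFun hquad x)

end Integral

end Matrix

theorem ensemble_average_exhaustive_general {p : ℕ} {ΩY : Type*}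
    [MetricSpace ΩY] [MeasurableSpace ΩY] [BorelSpace ΩY]
    (PY : Measure ΩY) [PY.IsOpenPosMeasure]
    (S : Submodule ℝ (Fin p → ℝ))
    (M₀ : ΩY → Matrix (Fin p) (Fin p) ℝ)
    (hcont : Continuous M₀)
    (hpsd : ∀ y, (M₀ y).PosSemidef)
    (hspan : (⨆ y : ΩY, LinearMap.range (M₀ y).mulVecLin) = S)
    (G : ΩY → ℝ) (hG : Integrable G PY)
    (hbound : ∀ y, ‖M₀ y‖ ≤ G y) :
    LinearMap.range (∫ y, M₀ y ∂PY).mulVecLin = S := by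
  -- Measurability is found through the underlying function space, which has the needed instances.
  have hint : Integrable M₀ PY :=
    hG.mono' (Continuous.aestronglyMeasurable (β := Fin p → Fin p → ℝ) hcont) (.of_forall hbound)
  rw [← hspan]
  exact (isHermitian_integral hint fun y => (hpsd y).1).range_mulVecLin_eq_iSup_of_ker_eq_iInf
    (fun y => (hpsd y).1) (ker_integral_eq_iInf_ker hcont hint hpsd)

/-- ensemble averaging achieves exhaustiveness; Theorem 2, part 2.
Let `(Ω_Y, d)` be a metric space, `P_Y` a strictly positive Borel probability measure on
`Ω_Y` (every nonempty open set has positive measure), and `y ↦ M₀ y` a continuous map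
into the positive semidefinite `p × p` matrices such that the span of all the column
spaces `span(M₀ y)` equals `S`, with `‖M₀ y‖ ≤ G y` for an integrable `G`. Then the
column space of `M = ∫ M₀(y) dP_Y(y)` equals `S`. -/
theorem ensemble_average_exhaustive {p : ℕ} {ΩY : Type*}
    [MetricSpace ΩY] [MeasurableSpace ΩY] [BorelSpace ΩY]
    (PY : Measure ΩY) [IsProbabilityMeasure PY] [PY.IsOpenPosMeasure]
    (S : Submodule ℝ (Fin p → ℝ))
    (M₀ : ΩY → Matrix (Fin p) (Fin p) ℝ)
    (hcont : Continuous M₀)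
    (hpsd : ∀ y, (M₀ y).PosSemidef)
    (hspan : (⨆ y : ΩY, LinearMap.range (M₀ y).mulVecLin) = S)
    (G : ΩY → ℝ) (hG : Integrable G PY)
    (hbound : ∀ y, ‖M₀ y‖ ≤ G y) :
    LinearMap.range (∫ y, M₀ y ∂PY).mulVecLin = S :=
  ensemble_average_exhaustive_general PY S M₀ hcont hpsd hspan G hG hbound
end
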